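/- arXiv:2005.00134 — 5 statements merged into one kernel-verified Lean document; each statement's English description precedes it below -/
import Mathlib

section
/- Let T be a tree, X ⊆ V(T), and let P̃ be a partition of X that is the projection onto X of a partition of V(T) crossed by at most c edges of T. Then P̃ is also the projection onto X of a partition of V(proj(T,X)) crossed by at most c edges of proj(T,X). -/
/-!
Each projection step can only decrease the number of edges crossing a fixed partition `R`:
deleting a leaf removes an edge, and smoothing `v` replaces the path `a - v - b` by the edge
`ab`, which crosses `R` only if one of `va`, `vb` does. Hence `R` itself witnesses the claim
on `proj(T, X)`.
-/

/-- One step of the projection procedure: either delete a leaf not in `X`,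
or smooth (suppress) a degree-2 vertex not in `X`. -/
inductive ProjStep {V : Type} (X : Set V) : SimpleGraph V → SimpleGraph V → Prop
  | deleteLeaf (G : SimpleGraph V) (v : V) (hv : v ∉ X)
      (hdeg : (G.neighborSet v).ncard = 1) :
      ProjStep X G (SimpleGraph.fromEdgeSet (G.edgeSet \ {e | v ∈ e}))
  | smooth (G : SimpleGraph V) (v a b : V) (hv : v ∉ X)
      (hdeg : (G.neighborSet v).ncard = 2) (ha : G.Adj v a) (hb : G.Adj v b) (hab : a ≠ b) :
      ProjStep X G (SimpleGraph.fromEdgeSet ((G.edgeSet \ {e | v ∈ e}) ∪ {s(a, b)}))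

/-- The set of edges of `G` crossing the partition (setoid) `R`. -/
def crossingEdges {V : Type} (G : SimpleGraph V) (R : Setoid V) : Set (Sym2 V) :=
  {e | e ∈ G.edgeSet ∧ ∃ a b : V, e = s(a, b) ∧ ¬ R.r a b}

open SimpleGraph

section CrossingEdges

variable {V : Type} (R : Setoid V)

lemma notMem_crossingEdges_of_rel (G : SimpleGraph V) {a b : V} (hab : R.r a b) :
    s(a, b) ∉ crossingEdges G R := by
  rintro ⟨-, x, y, hxy, hxy'⟩
  rcases Sym2.eq_iff.mp hxy with ⟨rfl, rfl⟩ | ⟨rfl, rfl⟩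
  exacts [hxy' hab, hxy' (R.symm hab)]

lemma crossingEdges_fromEdgeSet_diff_subset (G : SimpleGraph V) (F : Set (Sym2 V)) :
    crossingEdges (fromEdgeSet (G.edgeSet \ F)) R ⊆ crossingEdges G R \ F := by
  rintro e ⟨he, hcross⟩
  rw [edgeSet_fromEdgeSet] at he
  exact ⟨⟨he.1.1, hcross⟩, he.1.2⟩

lemma crossingEdges_fromEdgeSet_union_singleton_subset (S : Set (Sym2 V)) (e : Sym2 V) :
    crossingEdges (fromEdgeSet (S ∪ {e})) R ⊆ insert e (crossingEdges (fromEdgeSet S) R) := by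
  rintro f ⟨hf, hcross⟩
  rw [edgeSet_fromEdgeSet] at hf
  obtain ⟨hS | rfl, hdiag⟩ := hf
  · exact Or.inr ⟨by rw [edgeSet_fromEdgeSet]; exact ⟨hS, hdiag⟩, hcross⟩
  · exact Or.inl rfl

lemma exists_crossingEdges_of_adj_of_not_rel {G : SimpleGraph V} {v a b : V}
    (ha : G.Adj v a) (hb : G.Adj v b) (hab : ¬ R.r a b) :
    ∃ w, s(v, w) ∈ crossingEdges G R := by
  by_cases hva : R.r v a
  · exact ⟨b, G.mem_edgeSet.mpr hb, v, b, rfl, fun hvb => hab (R.trans (R.symm hva) hvb)⟩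
  · exact ⟨a, G.mem_edgeSet.mpr ha, v, a, rfl, hva⟩

variable [Finite V]

lemma ncard_crossingEdges_smooth_le (G : SimpleGraph V) {v a b : V}
    (ha : G.Adj v a) (hb : G.Adj v b) :
    (crossingEdges (fromEdgeSet ((G.edgeSet \ {e | v ∈ e}) ∪ {s(a, b)})) R).ncard ≤
      (crossingEdges G R).ncard := by
  have hunion := crossingEdges_fromEdgeSet_union_singleton_subset R
    (G.edgeSet \ {e | v ∈ e}) s(a, b)
  have hdiff := crossingEdges_fromEdgeSet_diff_subset R G {e | v ∈ e}
  by_cases hab : R.r a b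
  · refine Set.ncard_le_ncard (fun f hf => ?_)
    obtain rfl | hf' := hunion hf
    · exact absurd hf (notMem_crossingEdges_of_rel R _ hab)
    · exact (hdiff hf').1
  · obtain ⟨w, hw⟩ := exists_crossingEdges_of_adj_of_not_rel R ha hb hab
    have hlt : (crossingEdges G R \ {e | v ∈ e}).ncard < (crossingEdges G R).ncard :=
      Set.ncard_lt_ncard (Set.sdiff_ssubset_left_iff.mpr ⟨s(v, w), hw, Sym2.mem_mk_left v w⟩)
    calc _ ≤ (insert s(a, b) (crossingEdges (fromEdgeSet (G.edgeSet \ {e | v ∈ e})) R)).ncard :=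
          Set.ncard_le_ncard hunion
      _ ≤ (crossingEdges (fromEdgeSet (G.edgeSet \ {e | v ∈ e})) R).ncard + 1 :=
          Set.ncard_insert_le _ _
      _ ≤ (crossingEdges G R \ {e | v ∈ e}).ncard + 1 :=
          Nat.add_le_add_right (Set.ncard_le_ncard hdiff) 1
      _ ≤ (crossingEdges G R).ncard := hlt

end CrossingEdges

lemma ProjStep.ncard_crossingEdges_le {V : Type} [Finite V] {X : Set V} {G G' : SimpleGraph V}
    (h : ProjStep X G G') (R : Setoid V) :
    (crossingEdges G' R).ncard ≤ (crossingEdges G R).ncard := by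
  cases h with
  | deleteLeaf v _ _ =>
    exact Set.ncard_le_ncard
      ((crossingEdges_fromEdgeSet_diff_subset R G _).trans Set.sdiff_subset)
  | smooth v a b _ _ ha hb _ => exact ncard_crossingEdges_smooth_le R G ha hb

lemma ncard_crossingEdges_le_of_reflTransGen {V : Type} [Finite V] {X : Set V}
    {G G' : SimpleGraph V} (h : Relation.ReflTransGen (ProjStep X) G G') (R : Setoid V) :
    (crossingEdges G' R).ncard ≤ (crossingEdges G R).ncard := by
  induction h with
  | refl => exact le_rfl
  | tail _ hstep ih => exact (hstep.ncard_crossingEdges_le R).trans ih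

theorem stmt_5_general {V : Type} [Fintype V] (X : Set V) (T T'' : SimpleGraph V)
    (hreach : Relation.ReflTransGen (ProjStep X) T T'')
    (c : ℕ) (R : Setoid V) (hc : (crossingEdges T R).ncard ≤ c) :
    ∃ R' : Setoid V, (crossingEdges T'' R').ncard ≤ c ∧
      ∀ x ∈ X, ∀ y ∈ X, (R'.r x y ↔ R.r x y) :=
  ⟨R, (ncard_crossingEdges_le_of_reflTransGen hreach R).trans hc, fun _ _ _ _ => Iff.rfl⟩

/-- If a partition `P̃` of `X` is the projection onto `X` of a partition of the vertices of a
tree `T` crossed by at most `c` edges of `T`, then `P̃` is also the projection onto `X` of a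
partition of the vertices of `proj(T,X)` crossed by at most `c` edges of `proj(T,X)`.
Partitions are encoded as setoids, and `T''` is the projection `proj(T,X)` (a normal form of
the projection rewriting procedure). -/
theorem stmt_5 {V : Type} [Fintype V] (X : Set V) (T T'' : SimpleGraph V) (hT : T.IsTree)
    (hreach : Relation.ReflTransGen (ProjStep X) T T'')
    (hnf : ∀ H, ¬ ProjStep X T'' H)
    (c : ℕ) (R : Setoid V) (hc : (crossingEdges T R).ncard ≤ c) :
    ∃ R' : Setoid V, (crossingEdges T'' R').ncard ≤ c ∧
      ∀ x ∈ X, ∀ y ∈ X, (R'.r x y ↔ R.r x y) :=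
  stmt_5_general X T T'' hreach c R hc
end

section
/- Let T be a tree, X ⊆ V(T), and let P̃ be a partition of X that is the projection onto X of a partition of V(proj(T,X)) crossed by at most c edges of proj(T,X). Then P̃ is the projection onto X of a partition of V(T) crossed by at most c edges of T. -/
/-!
Each projection step can be undone on partitions by merging the removed vertex `v` into a
neighbour `a`, i.e. pulling the partition back along `Function.update id v a`. An edge at `v`
then either collapses (the edge `va`) or is sent to the edge `aw` of the projected graph, and
the other edges are unchanged, so crossing edges are sent injectively to crossing edges.
Injectivity needs that `aw` is not already an edge, which holds because every intermediate
graph is still acyclic.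
-/

namespace SimpleGraph

variable {V : Type} {G H : SimpleGraph V} {v a b : V}

theorem fromEdgeSet_edgeSet_sdiff_setOf_mem (G : SimpleGraph V) (v : V) :
    fromEdgeSet (G.edgeSet \ {e | v ∈ e}) = G.deleteIncidenceSet v := by
  ext x y
  simp only [fromEdgeSet_adj, Set.mem_sdiff, mem_edgeSet, Set.mem_ofPred_eq, Sym2.mem_iff,
    deleteIncidenceSet_adj]
  grind [Adj.ne]

theorem fromEdgeSet_edgeSet_sdiff_setOf_mem_union (G : SimpleGraph V) (v a b : V) :
    fromEdgeSet ((G.edgeSet \ {e | v ∈ e}) ∪ {s(a, b)}) = G.deleteIncidenceSet v ⊔ edge a b := by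
  rw [fromEdgeSet_union, fromEdgeSet_edgeSet_sdiff_setOf_mem, edge]

theorem IsAcyclic.not_reachable_deleteIncidenceSet (hG : G.IsAcyclic) (ha : G.Adj v a)
    (hb : G.Adj v b) (hab : a ≠ b) : ¬ (G.deleteIncidenceSet v).Reachable a b := by
  intro hreach
  have hbridge : G.IsBridge s(v, a) := isAcyclic_iff_forall_adj_isBridge.1 hG ha
  have hle : G.deleteIncidenceSet v ≤ G.deleteEdges {s(v, a)} :=
    deleteEdges_anti (by simpa [incidenceSet] using ha)
  have hvb : (G.deleteEdges {s(v, a)}).Adj v b := by simp [hb, hab.symm, ha.ne]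
  exact hbridge (hvb.reachable.trans (hreach.mono hle).symm)

theorem IsAcyclic.not_adj_of_adj_of_adj (hG : G.IsAcyclic) (ha : G.Adj v a)
    (hb : G.Adj v b) (hab : a ≠ b) : ¬ G.Adj a b := fun hadj =>
  hG.not_reachable_deleteIncidenceSet ha hb hab <|
    Adj.reachable <| deleteIncidenceSet_adj.2 ⟨hadj, ha.ne.symm, hb.ne.symm⟩

theorem ncard_crossingEdges_comap_le [Finite V] (f : V → V) (R : Setoid V)
    (hmap : ∀ ⦃x y⦄, G.Adj x y → f x ≠ f y → H.Adj (f x) (f y))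
    (hinj : Set.InjOn (Sym2.map f) (crossingEdges G (R.comap f))) :
    (crossingEdges G (R.comap f)).ncard ≤ (crossingEdges H R).ncard := by
  refine Set.ncard_le_ncard_of_injOn _ ?_ hinj (Set.toFinite _)
  rintro _ ⟨hxy, x, y, rfl, hR⟩
  rw [Setoid.comap_rel] at hR
  exact ⟨hmap hxy fun h => hR (h ▸ R.refl _), f x, f y, rfl, hR⟩

variable [DecidableEq V]

theorem adj_update_id_of_adj (hle : G.deleteIncidenceSet v ≤ H)
    (hH : ∀ w, G.Adj v w → w ≠ a → H.Adj a w) ⦃x y : V⦄ (hxy : G.Adj x y)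
    (hf : Function.update id v a x ≠ Function.update id v a y) :
    H.Adj (Function.update id v a x) (Function.update id v a y) := by
  obtain rfl | hx := eq_or_ne x v
  · have hy : y ≠ x := hxy.ne.symm
    simp only [Function.update_self, Function.update_of_ne hy, id] at hf ⊢
    exact hH y hxy hf.symm
  obtain rfl | hy := eq_or_ne y v
  · simp only [Function.update_self, Function.update_of_ne hx, id] at hf ⊢
    exact (hH x hxy.symm hf).symm
  simp only [Function.update_of_ne hx, Function.update_of_ne hy, id]
  exact hle (deleteIncidenceSet_adj.2 ⟨hxy, hx, hy⟩)

theorem injOn_sym2Map_update_id (hG : ∀ w, G.Adj v w → w ≠ a → ¬ G.Adj a w) :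
    Set.InjOn (Sym2.map (Function.update id v a))
      {e ∈ G.edgeSet | ¬ (e.map (Function.update id v a)).IsDiag} := by
  rintro ⟨p₁, q₁⟩ ⟨h₁, h₁'⟩ ⟨p₂, q₂⟩ ⟨h₂, h₂'⟩ heq
  simp only [Sym2.map_mk, Sym2.mk_isDiag_iff, mem_edgeSet, Sym2.eq_iff, Function.update_apply,
    id] at *
  grind [Adj.ne, Adj.symm]

theorem exists_setoid_ncard_crossingEdges_le_of_merge [Finite V] {X : Set V} (hv : v ∉ X)
    (hle : G.deleteIncidenceSet v ≤ H) (hH : ∀ w, G.Adj v w → w ≠ a → H.Adj a w)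
    (hG : ∀ w, G.Adj v w → w ≠ a → ¬ G.Adj a w) (R : Setoid V) :
    ∃ R' : Setoid V, (crossingEdges G R').ncard ≤ (crossingEdges H R).ncard ∧
      ∀ x ∈ X, ∀ y ∈ X, (R' x y ↔ R x y) := by
  refine ⟨R.comap (Function.update id v a),
    ncard_crossingEdges_comap_le _ R (adj_update_id_of_adj hle hH)
      ((injOn_sym2Map_update_id hG).mono ?_), fun x hx y hy => ?_⟩
  · rintro _ ⟨hxy, x, y, rfl, hR⟩
    refine ⟨hxy, fun hdiag => hR ?_⟩
    rw [Sym2.map_mk, Sym2.mk_isDiag_iff] at hdiag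
    rw [Setoid.comap_rel, hdiag]
  · rw [Setoid.comap_rel, Function.update_of_ne (ne_of_mem_of_not_mem hx hv),
      Function.update_of_ne (ne_of_mem_of_not_mem hy hv)]
    rfl

end SimpleGraph

namespace ProjStep

open SimpleGraph

variable {V : Type} {X : Set V} {G H : SimpleGraph V}

theorem isAcyclic (hs : ProjStep X G H) (hG : G.IsAcyclic) : H.IsAcyclic := by
  cases hs with
  | deleteLeaf v hv hdeg =>
    rw [fromEdgeSet_edgeSet_sdiff_setOf_mem]
    exact hG.anti (G.deleteIncidenceSet_le v)
  | smooth v a b hv hdeg ha hb hab =>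
    rw [fromEdgeSet_edgeSet_sdiff_setOf_mem_union]
    exact (hG.anti (G.deleteIncidenceSet_le v)).sup_edge_of_not_reachable
      (hG.not_reachable_deleteIncidenceSet ha hb hab)

theorem exists_setoid_ncard_crossingEdges_le [Finite V] (hs : ProjStep X G H)
    (hG : G.IsAcyclic) (R : Setoid V) :
    ∃ R' : Setoid V, (crossingEdges G R').ncard ≤ (crossingEdges H R).ncard ∧
      ∀ x ∈ X, ∀ y ∈ X, (R' x y ↔ R x y) := by
  classical
  cases hs with
  | deleteLeaf v hv hdeg =>
    obtain ⟨u, hu⟩ := Set.ncard_eq_one.1 hdeg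
    have hnbr : ∀ w, G.Adj v w → w = u := fun w hw => hu.subset hw
    refine exists_setoid_ncard_crossingEdges_le_of_merge (a := u) hv
      (fromEdgeSet_edgeSet_sdiff_setOf_mem G v).ge ?_ ?_ R <;>
      exact fun w hw hwu => absurd (hnbr w hw) hwu
  | smooth v a b hv hdeg ha hb hab =>
    have hnbr : G.neighborSet v = {a, b} :=
      (Set.eq_of_subset_of_ncard_le (t := G.neighborSet v)
        (Set.insert_subset ha (Set.singleton_subset_iff.2 hb))
        (by rw [hdeg, Set.ncard_pair hab]) (Set.toFinite _)).symm
    have eq_b_of_adj : ∀ w, G.Adj v w → w ≠ a → w = b := fun w hw hwa =>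
      (show w ∈ ({a, b} : Set V) from hnbr ▸ hw).resolve_left hwa
    refine exists_setoid_ncard_crossingEdges_le_of_merge (a := a) hv ?_ ?_ ?_ R
    · rw [fromEdgeSet_edgeSet_sdiff_setOf_mem_union]
      exact le_sup_left
    · intro w hw hwa
      rw [eq_b_of_adj w hw hwa, fromEdgeSet_edgeSet_sdiff_setOf_mem_union]
      exact Or.inr ((edge_adj a b a b).2 ⟨Or.inl ⟨rfl, rfl⟩, hab⟩)
    · intro w hw hwa
      rw [eq_b_of_adj w hw hwa]
      exact hG.not_adj_of_adj_of_adj ha hb hab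

end ProjStep

theorem exists_setoid_ncard_crossingEdges_le_of_reflTransGen {V : Type} [Finite V] {X : Set V}
    {G H : SimpleGraph V} (h : Relation.ReflTransGen (ProjStep X) G H) (hG : G.IsAcyclic)
    (R : Setoid V) :
    ∃ R' : Setoid V, (crossingEdges G R').ncard ≤ (crossingEdges H R).ncard ∧
      ∀ x ∈ X, ∀ y ∈ X, (R' x y ↔ R x y) := by
  induction h using Relation.ReflTransGen.head_induction_on with
  | refl => exact ⟨R, le_rfl, fun _ _ _ _ => Iff.rfl⟩
  | head hstep _ ih =>
    obtain ⟨R₁, hR₁, hagree₁⟩ := ih (hstep.isAcyclic hG)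
    obtain ⟨R₂, hR₂, hagree₂⟩ := hstep.exists_setoid_ncard_crossingEdges_le hG R₁
    exact ⟨R₂, hR₂.trans hR₁, fun x hx y hy => (hagree₂ x hx y hy).trans (hagree₁ x hx y hy)⟩

theorem stmt_6_general {V : Type} [Fintype V] (X : Set V) (T T'' : SimpleGraph V) (hT : T.IsTree)
    (hreach : Relation.ReflTransGen (ProjStep X) T T'')
    (c : ℕ) (R : Setoid V) (hc : (crossingEdges T'' R).ncard ≤ c) :
    ∃ R' : Setoid V, (crossingEdges T R').ncard ≤ c ∧
      ∀ x ∈ X, ∀ y ∈ X, (R'.r x y ↔ R.r x y) := by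
  obtain ⟨R', hR', hagree⟩ :=
    exists_setoid_ncard_crossingEdges_le_of_reflTransGen hreach hT.isAcyclic R
  exact ⟨R', hR'.trans hc, hagree⟩

/-- If a partition `P̃` of `X` is the projection onto `X` of a partition of the vertices of
`proj(T,X)` crossed by at most `c` edges of `proj(T,X)`, then `P̃` is the projection onto `X`
of a partition of the vertices of the tree `T` crossed by at most `c` edges of `T`.
Partitions are encoded as setoids, and `T''` is the projection `proj(T,X)` (a normal form of
the projection rewriting procedure). -/
theorem stmt_6 {V : Type} [Fintype V] (X : Set V) (T T'' : SimpleGraph V) (hT : T.IsTree)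
    (hreach : Relation.ReflTransGen (ProjStep X) T T'')
    (hnf : ∀ H, ¬ ProjStep X T'' H)
    (c : ℕ) (R : Setoid V) (hc : (crossingEdges T'' R).ncard ≤ c) :
    ∃ R' : Setoid V, (crossingEdges T R').ncard ≤ c ∧
      ∀ x ∈ X, ∀ y ∈ X, (R'.r x y ↔ R.r x y) :=
  stmt_6_general X T T'' hT hreach c R hc
end

section
/- Let T be a tree with n vertices, X ⊆ V(T), and k a positive integer. The number of partitions of X that arise as projections onto X of partitions of V(T) crossed by at most 2k-2 edges of T is at most (4k|X|)^{2k}. -/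
/-!
Root the tree at a vertex `r ∈ X`. The far sides of the edges (the vertices separated from `r`
by the edge) form a laminar family, so their traces on `X` take fewer than `2|X|` values.
If at most `m = 2k - 2` edges `S` cross `R`, then two vertices are `R`-related as soon as they
are joined in `T - S`, which happens iff they lie on the same side of every edge of `S`.
So the projection of `R` onto `X` coarsens the partition of `X` cut out by an `m`-tuple of
traces, a partition with at most `m + 1` classes since `T - S` has at most `m + 1` components.
There are at most `(2|X|)^m` such tuples and each such partition has at most `(m + 1)^(m + 1)`
coarsenings.
-/

open Set SimpleGraph

theorem Set.Finite.exists_subset_range_fin {α : Type*} [Nonempty α] {s : Set α} (hs : s.Finite)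
    {m : ℕ} (hm : s.ncard ≤ m) : ∃ σ : Fin m → α, s ⊆ range σ := by
  obtain ⟨n, f, hf, rfl⟩ := hs.fin_param
  rw [ncard_range_of_injective hf, Nat.card_fin] at hm
  refine ⟨fun i ↦ if h : (i : ℕ) < n then f ⟨i, h⟩ else Classical.arbitrary α, ?_⟩
  rintro _ ⟨j, rfl⟩
  exact ⟨Fin.castLE hm j, by simp⟩

section Coarsenings
variable {α β : Type*}

theorem Setoid.injective_out_mk :
    Function.Injective fun (Q : Setoid α) a ↦ (Quotient.mk Q a).out :=
  fun Q Q' h ↦ Setoid.ext fun a b ↦ by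
    have key (Q : Setoid α) : Q a b ↔ (Quotient.mk Q a).out = (Quotient.mk Q b).out :=
      (Quotient.out_inj.trans Quotient.eq).symm
    have ha : (Quotient.mk Q a).out = (Quotient.mk Q' a).out := congrFun h a
    have hb : (Quotient.mk Q b).out = (Quotient.mk Q' b).out := congrFun h b
    rw [key, key, ha, hb]

instance [Finite α] : Finite (Setoid α) := Finite.of_injective _ Setoid.injective_out_mk

theorem Nat.card_setoid_le [Finite α] : Nat.card (Setoid α) ≤ Nat.card α ^ Nat.card α :=
  (Nat.card_le_card_of_injective _ Setoid.injective_out_mk).trans_eq Nat.card_fun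

theorem Setoid.ncard_setOf_ker_le_le [Finite α] (f : α → β) :
    {Q : Setoid α | Setoid.ker f ≤ Q}.ncard ≤ Nat.card (range f) ^ Nat.card (range f) := by
  rw [← Nat.card_coe_set_eq, ← Nat.card_congr (Setoid.quotientKerEquivRange f)]
  exact (Nat.card_congr (Setoid.correspondence _).toEquiv).trans_le Nat.card_setoid_le

theorem Setoid.ncard_le_of_forall_exists_ker_le {ι : Type*} [Finite ι] [Finite α]
    {𝒬 : Set (Setoid α)} (f : ι → α → β) (N : ℕ)
    (h : ∀ Q ∈ 𝒬, ∃ i, Setoid.ker (f i) ≤ Q ∧ Nat.card (range (f i)) ≤ N) :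
    𝒬.ncard ≤ Nat.card ι * N ^ N := by
  have := Fintype.ofFinite ι
  set s : ι → Set (Setoid α) := fun i ↦ {Q | Setoid.ker (f i) ≤ Q ∧ Nat.card (range (f i)) ≤ N}
  have hs (i : ι) : (s i).ncard ≤ N ^ N := by
    by_cases hi : Nat.card (range (f i)) ≤ N
    · calc (s i).ncard ≤ {Q : Setoid α | Setoid.ker (f i) ≤ Q}.ncard :=
            ncard_le_ncard fun Q hQ ↦ hQ.1
        _ ≤ Nat.card (range (f i)) ^ Nat.card (range (f i)) := Setoid.ncard_setOf_ker_le_le _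
        _ ≤ N ^ N := by
          rcases Nat.eq_zero_or_pos (Nat.card (range (f i))) with h0 | hpos
          · rw [h0, pow_zero]; exact Nat.pow_self_pos
          · exact (Nat.pow_le_pow_left hi _).trans (Nat.pow_le_pow_right (by omega) hi)
    · rw [show s i = ∅ from eq_empty_of_forall_notMem fun Q hQ ↦ hi hQ.2, ncard_empty]
      exact Nat.zero_le _
  calc 𝒬.ncard ≤ (⋃ i, s i).ncard := ncard_le_ncard fun Q hQ ↦ mem_iUnion.mpr (h Q hQ)
    _ ≤ ∑ i, (s i).ncard := ncard_iUnion_le_of_fintype s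
    _ ≤ ∑ _i : ι, N ^ N := Finset.sum_le_sum fun i _ ↦ hs i
    _ = Nat.card ι * N ^ N := by simp [Nat.card_eq_fintype_card]

end Coarsenings

section Laminar
variable {α : Type*} {𝓕 𝓖 : Set (Set α)}

def IsLaminar (𝓕 : Set (Set α)) : Prop :=
  ∀ A ∈ 𝓕, ∀ B ∈ 𝓕, A ⊆ B ∨ B ⊆ A ∨ Disjoint A B

namespace IsLaminar

theorem mono (h : IsLaminar 𝓕) (h𝓖 : 𝓖 ⊆ 𝓕) : IsLaminar 𝓖 :=
  fun A hA B hB ↦ h A (h𝓖 hA) B (h𝓖 hB)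

theorem image_sdiff_singleton (h : IsLaminar 𝓕) (u : α) : IsLaminar ((· \ {u}) '' 𝓕) := by
  rintro _ ⟨A, hA, rfl⟩ _ ⟨B, hB, rfl⟩
  rcases h A hA B hB with hAB | hBA | hAB
  · exact .inl (sdiff_subset_sdiff_left hAB)
  · exact .inr (.inl (sdiff_subset_sdiff_left hBA))
  · exact .inr (.inr (hAB.mono sdiff_subset sdiff_subset))

theorem ncard_le_ncard_image_sdiff_singleton_add_one [Finite α] (h : IsLaminar 𝓕)
    (hne : ∀ A ∈ 𝓕, A.Nonempty) (u : α) : 𝓕.ncard ≤ ((· \ {u}) '' 𝓕).ncard + 1 := by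
  -- only the members of `D` can collide with another member, and laminarity allows one at most
  set D := {A ∈ 𝓕 | u ∈ A ∧ A \ {u} ∈ 𝓕}
  have hD_of_subset : ∀ A ∈ D, ∀ B ∈ D, A ⊆ B → A = B := by
    rintro A ⟨hA, huA, hA'⟩ B ⟨hB, huB, hB'⟩ hAB
    rcases h A hA _ hB' with hAB' | hBA' | hdisj
    · exact absurd (hAB' huA).2 (by simp)
    · exact hAB.antisymm fun b hb ↦ by
        by_cases hbu : b = u
        · exact hbu ▸ huA
        · exact hBA' ⟨hb, hbu⟩
    · obtain ⟨a, haA, hau⟩ := hne _ hA'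
      exact absurd (hdisj.ne_of_mem haA ⟨hAB haA, hau⟩ rfl) (by simp)
  have hD : D.ncard ≤ 1 := by
    refine (ncard_le_one).mpr fun A hA B hB ↦ ?_
    rcases h A hA.1 B hB.1 with hAB | hBA | hdisj
    · exact hD_of_subset A hA B hB hAB
    · exact (hD_of_subset B hB A hA hBA).symm
    · exact absurd (hdisj.ne_of_mem hA.2.1 hB.2.1 rfl) (by simp)
  have hinj : InjOn (· \ {u}) (𝓕 \ D) := by
    rintro A ⟨hA, hAD⟩ B ⟨hB, hBD⟩ (hAB : A \ {u} = B \ {u})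
    by_cases huA : u ∈ A <;> by_cases huB : u ∈ B
    · rw [← insert_eq_of_mem huA, ← insert_sdiff_singleton, hAB, insert_sdiff_singleton,
        insert_eq_of_mem huB]
    · exact absurd ⟨hA, huA, hAB ▸ (sdiff_singleton_eq_self huB).symm ▸ hB⟩ hAD
    · exact absurd ⟨hB, huB, hAB ▸ (sdiff_singleton_eq_self huA).symm ▸ hA⟩ hBD
    · rwa [sdiff_singleton_eq_self huA, sdiff_singleton_eq_self huB] at hAB
  calc 𝓕.ncard ≤ (𝓕 \ D).ncard + D.ncard := ncard_le_ncard_sdiff_add_ncard _ _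
    _ ≤ ((· \ {u}) '' 𝓕).ncard + 1 := by
      rw [← hinj.ncard_image]
      exact add_le_add (ncard_le_ncard (image_mono sdiff_subset)) hD

theorem ncard_le_two_mul [Finite α] (h : IsLaminar 𝓕) (hne : ∀ A ∈ 𝓕, A.Nonempty)
    {U : Set α} (hU : ∀ A ∈ 𝓕, A ⊆ U) : 𝓕.ncard ≤ 2 * U.ncard := by
  induction U, toFinite U using Finite.induction_on generalizing 𝓕 with
  | empty =>
    rw [(ncard_eq_zero).mpr (eq_empty_of_forall_notMem fun A hA ↦
      (hne A hA).ne_empty (subset_empty_iff.mp (hU A hA)))]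
    exact Nat.zero_le _
  | @insert u U hu _ ih =>
    have h𝓕' : (((· \ {u}) '' 𝓕) \ {∅}).ncard ≤ 2 * U.ncard :=
      ih ((h.image_sdiff_singleton u).mono sdiff_subset)
        (fun A hA ↦ nonempty_iff_ne_empty.mpr hA.2)
        (by
          rintro _ ⟨⟨A, hA, rfl⟩, -⟩
          exact sdiff_singleton_subset_iff.mpr (hU A hA))
    have := h.ncard_le_ncard_image_sdiff_singleton_add_one hne u
    have := pred_ncard_le_ncard_sdiff_singleton ((· \ {u}) '' 𝓕) ∅
    rw [ncard_insert_of_notMem hu]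
    omega

end IsLaminar
end Laminar

namespace SimpleGraph
variable {V β : Type*} {G : SimpleGraph V}

theorem Reachable.deleteEdges_singleton_cases {a b x y : V} (h : G.Reachable x y) :
    (G.deleteEdges {s(a, b)}).Reachable x y ∨
    (G.deleteEdges {s(a, b)}).Reachable x a ∧ (G.deleteEdges {s(a, b)}).Reachable b y ∨
    (G.deleteEdges {s(a, b)}).Reachable x b ∧ (G.deleteEdges {s(a, b)}).Reachable a y := by
  obtain ⟨p⟩ := h
  induction p with
  | nil => exact .inl .rfl
  | @cons u z y hadj p ih =>
    by_cases he : s(u, z) = s(a, b)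
    · rcases Sym2.eq_iff.mp he with ⟨rfl, rfl⟩ | ⟨rfl, rfl⟩
      · rcases ih with h | ⟨-, h⟩ | ⟨-, h⟩
        · exact .inr (.inl ⟨.rfl, h⟩)
        · exact .inr (.inl ⟨.rfl, h⟩)
        · exact .inl h
      · rcases ih with h | ⟨-, h⟩ | ⟨-, h⟩
        · exact .inr (.inr ⟨.rfl, h⟩)
        · exact .inl h
        · exact .inr (.inr ⟨.rfl, h⟩)
    · have huz : (G.deleteEdges {s(a, b)}).Reachable u z :=
        (deleteEdges_adj.mpr ⟨hadj, he⟩).reachable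
      rcases ih with h | ⟨h, h'⟩ | ⟨h, h'⟩
      · exact .inl (huz.trans h)
      · exact .inr (.inl ⟨huz.trans h, h'⟩)
      · exact .inr (.inr ⟨huz.trans h, h'⟩)

theorem card_connectedComponent_deleteEdges_singleton_le [Finite V] (G : SimpleGraph V)
    (e : Sym2 V) :
    Nat.card (G.deleteEdges {e}).ConnectedComponent ≤ Nat.card G.ConnectedComponent + 1 := by
  classical
  induction e with | h a b =>
  have := Fintype.ofFinite (G.deleteEdges {s(a, b)}).ConnectedComponent
  have := Fintype.ofFinite G.ConnectedComponent
  set H := G.deleteEdges {s(a, b)}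
  let φ : H.ConnectedComponent → G.ConnectedComponent := .map (.ofLE (deleteEdges_le _))
  have hinj : InjOn φ {H.connectedComponentMk b}ᶜ := by
    intro c hc d hd hcd
    induction c using ConnectedComponent.ind with | h u =>
    induction d using ConnectedComponent.ind with | h v =>
    rcases (ConnectedComponent.exact hcd).deleteEdges_singleton_cases (a := a) (b := b) with
      h | ⟨-, h⟩ | ⟨h, -⟩
    · exact ConnectedComponent.sound h
    · exact absurd (ConnectedComponent.sound h).symm hd
    · exact absurd (ConnectedComponent.sound h) hc
  calc Nat.card H.ConnectedComponent
      ≤ (Finset.univ.erase (H.connectedComponentMk b)).card + 1 := by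
        rw [Nat.card_eq_fintype_card, Finset.card_erase_of_mem (Finset.mem_univ _),
          Finset.card_univ]
        omega
    _ ≤ Nat.card G.ConnectedComponent + 1 := by
        rw [Nat.card_eq_fintype_card, ← Finset.card_univ]
        gcongr
        exact Finset.card_le_card_of_injOn φ (fun _ _ ↦ Finset.mem_coe.mpr (Finset.mem_univ _))
          (hinj.mono fun c hc ↦ by simpa using hc)

theorem card_connectedComponent_deleteEdges_le [Finite V] (G : SimpleGraph V)
    (S : Set (Sym2 V)) :
    Nat.card (G.deleteEdges S).ConnectedComponent ≤ Nat.card G.ConnectedComponent + S.ncard := by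
  induction S, toFinite S using Finite.induction_on with
  | empty => simp
  | @insert e S he hS ih =>
    rw [ncard_insert_of_notMem he hS, ← union_singleton, ← deleteEdges_deleteEdges]
    have := card_connectedComponent_deleteEdges_singleton_le (G.deleteEdges S) e
    omega

theorem Connected.card_connectedComponent_deleteEdges_le [Finite V] (hG : G.Connected)
    (S : Set (Sym2 V)) : Nat.card (G.deleteEdges S).ConnectedComponent ≤ S.ncard + 1 := by
  have : Nat.card G.ConnectedComponent ≤ 1 :=
    Finite.card_le_one_iff_subsingleton.mpr hG.preconnected.subsingleton_connectedComponent
  have := G.card_connectedComponent_deleteEdges_le S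
  omega

theorem card_range_le_card_connectedComponent [Finite V] {f : V → β}
    (hf : ∀ v w, G.Reachable v w → f v = f w) :
    Nat.card (range f) ≤ Nat.card G.ConnectedComponent := by
  have hrange : range f = range (ConnectedComponent.lift f fun v w p _ ↦ hf v w ⟨p⟩) := by
    ext; simp [ConnectedComponent.exists]
  rw [hrange]
  exact Finite.card_range_le _

theorem Connected.reachable_deleteEdges_singleton_or (hG : G.Connected) (a b v : V) :
    (G.deleteEdges {s(a, b)}).Reachable a v ∨ (G.deleteEdges {s(a, b)}).Reachable b v := by
  rcases (hG.preconnected a v).deleteEdges_singleton_cases (a := a) (b := b) with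
    h | ⟨-, h⟩ | ⟨-, h⟩
  · exact .inl h
  · exact .inr h
  · exact .inl h

def farSide (G : SimpleGraph V) (r : V) (e : Sym2 V) : Set V :=
  {v | ¬ (G.deleteEdges {e}).Reachable r v}

theorem notMem_farSide_self (G : SimpleGraph V) (r : V) (e : Sym2 V) : r ∉ G.farSide r e :=
  fun h ↦ h .rfl

theorem Connected.reachable_deleteEdges_singleton_iff (hG : G.Connected) (r : V)
    {e : Sym2 V} {x y : V} :
    (G.deleteEdges {e}).Reachable x y ↔ (x ∈ G.farSide r e ↔ y ∈ G.farSide r e) := by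
  refine ⟨fun h ↦ not_congr ⟨fun hx ↦ hx.trans h, fun hy ↦ hy.trans h.symm⟩, fun h ↦ ?_⟩
  induction e with | h a b =>
  replace h := not_iff_not.mp h
  by_cases hx : (G.deleteEdges {s(a, b)}).Reachable r x
  · exact hx.symm.trans (h.mp hx)
  rcases hG.reachable_deleteEdges_singleton_or a b r with hr | hr <;>
  rcases hG.reachable_deleteEdges_singleton_or a b x with hx' | hx' <;>
  rcases hG.reachable_deleteEdges_singleton_or a b y with hy' | hy'
  all_goals first
    | exact hx'.symm.trans hy'
    | exact absurd (hr.symm.trans hx') hx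
    | exact absurd (hr.symm.trans hy') (h.not.mp hx)

theorem IsTree.reachable_deleteEdges_iff (hT : G.IsTree) {S : Set (Sym2 V)} {x y : V} :
    (G.deleteEdges S).Reachable x y ↔ ∀ e ∈ S, (G.deleteEdges {e}).Reachable x y := by
  refine ⟨fun h e he ↦ h.mono (deleteEdges_anti (singleton_subset_iff.mpr he)), fun h ↦ ?_⟩
  obtain ⟨p, hp⟩ := hT.connected.exists_isPath x y
  by_contra hxy
  obtain ⟨e, he, hep⟩ := p.exists_mem_edges_of_not_reachable_deleteEdges hxy
  -- a path avoiding `e` would be a second path from `x` to `y`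
  obtain ⟨q, hq⟩ := (h e he).exists_isPath
  have hpq : p = q.mapLe (deleteEdges_le _) :=
    congrArg Subtype.val ((hT.isAcyclic.subsingleton_path x y).elim ⟨p, hp⟩ ⟨_, hq.mapLe _⟩)
  rw [hpq, Walk.edges_mapLe_eq_edges] at hep
  simpa using q.edges_subset_edgeSet hep

theorem Connected.farSide_subset_or_subset [Finite V] (hG : G.Connected) (r : V)
    {e f : Sym2 V} (h : (G.farSide r e ∩ G.farSide r f).Nonempty) :
    G.farSide r e ⊆ G.farSide r f ∨ G.farSide r f ⊆ G.farSide r e := by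
  classical
  by_contra! hcon
  obtain ⟨x, hxe, hxf⟩ := h
  obtain ⟨⟨y, hye, hyf⟩, ⟨z, hzf, hze⟩⟩ := And.imp not_subset.mp not_subset.mp hcon
  -- `r, x, y, z` realise all four combinations of sides of `e` and `f`, but deleting two edges
  -- leaves at most three components
  let g : V → Bool × Bool := fun v ↦ (v ∈ G.farSide r e, v ∈ G.farSide r f)
  have hg : range g = univ := by
    refine eq_univ_of_forall ?_
    rintro ⟨_ | _, _ | _⟩
    · exact ⟨r, by simp [g, notMem_farSide_self]⟩
    · exact ⟨z, by simp [g, hze, hzf]⟩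
    · exact ⟨y, by simp [g, hye, hyf]⟩
    · exact ⟨x, by simp [g, hxe, hxf]⟩
  have hside : ∀ v w, (G.deleteEdges {e, f}).Reachable v w → g v = g w := fun v w hvw ↦ by
    simp only [g, Prod.mk.injEq, decide_eq_decide]
    exact ⟨(hG.reachable_deleteEdges_singleton_iff r).mp (hvw.mono (deleteEdges_anti (by simp))),
      (hG.reachable_deleteEdges_singleton_iff r).mp (hvw.mono (deleteEdges_anti (by simp)))⟩
  have h4 := card_range_le_card_connectedComponent hside
  rw [hg, Nat.card_univ, Nat.card_prod, Nat.card_eq_fintype_card, Fintype.card_bool] at h4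
  have h3 := hG.card_connectedComponent_deleteEdges_le {e, f}
  have h2 : ({e, f} : Set (Sym2 V)).ncard ≤ 2 := (ncard_insert_le _ _).trans (by simp)
  omega

def cutTraces (G : SimpleGraph V) (X : Set V) (r : V) : Set (Set V) :=
  range fun e ↦ X ∩ G.farSide r e

theorem Connected.isLaminar_cutTraces [Finite V] (hG : G.Connected) (X : Set V) (r : V) :
    IsLaminar (G.cutTraces X r) := by
  rintro _ ⟨e, rfl⟩ _ ⟨f, rfl⟩
  by_cases hd : Disjoint (X ∩ G.farSide r e) (X ∩ G.farSide r f)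
  · exact .inr (.inr hd)
  obtain ⟨x, ⟨-, hxe⟩, -, hxf⟩ := not_disjoint_iff.mp hd
  rcases hG.farSide_subset_or_subset r ⟨x, hxe, hxf⟩ with h | h
  · exact .inl (inter_subset_inter_right X h)
  · exact .inr (.inl (inter_subset_inter_right X h))

theorem Connected.ncard_cutTraces_lt [Finite V] (hG : G.Connected) {X : Set V} {r : V}
    (hr : r ∈ X) : (G.cutTraces X r).ncard < 2 * X.ncard := by
  have hlam : (G.cutTraces X r \ {∅}).ncard ≤ 2 * (X \ {r}).ncard :=
    ((hG.isLaminar_cutTraces X r).mono sdiff_subset).ncard_le_two_mul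
      (fun A hA ↦ nonempty_iff_ne_empty.mpr hA.2) (by
        rintro _ ⟨⟨e, rfl⟩, -⟩ v ⟨hvX, hve⟩
        exact ⟨hvX, fun hvr ↦ G.notMem_farSide_self r e (hvr ▸ hve)⟩)
  have hempty := ncard_le_ncard_sdiff_add_ncard (G.cutTraces X r) {∅}
  rw [ncard_sdiff_singleton_of_mem hr] at hlam
  rw [ncard_singleton] at hempty
  have : 0 < X.ncard := (ncard_pos).mpr ⟨r, hr⟩
  omega

end SimpleGraph

theorem rel_of_reachable_deleteEdges_crossingEdges {V : Type} {G : SimpleGraph V} {R : Setoid V}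
    {a b : V} (h : (G.deleteEdges (crossingEdges G R)).Reachable a b) : R a b := by
  obtain ⟨p⟩ := h
  induction p with
  | nil => exact R.refl _
  | cons hadj _ ih =>
    refine R.trans ?_ ih
    by_contra hR
    have hadj := deleteEdges_adj.mp hadj
    exact hadj.2 ⟨hadj.1, _, _, rfl, hR⟩

theorem SimpleGraph.IsTree.exists_ker_le_of_ncard_crossingEdges_le {V : Type} [Finite V]
    {G : SimpleGraph V} (hT : G.IsTree) (X : Set V) (r : V) {R : Setoid V} {m : ℕ}
    (hR : (crossingEdges G R).ncard ≤ m) :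
    ∃ F : Fin m → G.cutTraces X r,
      Setoid.ker (fun (x : X) i ↦ (x : V) ∈ (F i : Set V)) ≤ R.comap (↑) ∧
      Nat.card (range fun (x : X) i ↦ (x : V) ∈ (F i : Set V)) ≤ m + 1 := by
  have : Nonempty (Sym2 V) := ⟨s(r, r)⟩
  obtain ⟨σ, hσ⟩ := (toFinite _).exists_subset_range_fin hR
  let side (v : V) (i : Fin m) : Prop := v ∈ G.farSide r (σ i)
  have hside (v w : V) : side v = side w ↔ (G.deleteEdges (range σ)).Reachable v w := by
    rw [hT.reachable_deleteEdges_iff, forall_mem_range, funext_iff]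
    simp only [hT.connected.reachable_deleteEdges_singleton_iff r, side, eq_iff_iff]
  let F (i : Fin m) : G.cutTraces X r := ⟨X ∩ G.farSide r (σ i), σ i, rfl⟩
  have hsig : (fun (x : X) i ↦ (x : V) ∈ (F i : Set V)) = fun (x : X) ↦ side x :=
    funext fun x ↦ funext fun i ↦ propext ⟨And.right, And.intro x.2⟩
  refine ⟨F, ?_, ?_⟩ <;> rw [hsig]
  · intro x y hxy
    exact (Setoid.comap_rel _ _ _ _).mpr <| rel_of_reachable_deleteEdges_crossingEdges
      (((hside x y).mp hxy).mono (deleteEdges_anti hσ))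
  · calc Nat.card (range fun (x : X) ↦ side x)
        ≤ Nat.card (range side) := by
          rw [Nat.card_coe_set_eq, Nat.card_coe_set_eq]
          exact ncard_le_ncard (range_comp_subset_range (Subtype.val : X → V) side)
      _ ≤ Nat.card (G.deleteEdges (range σ)).ConnectedComponent :=
          card_range_le_card_connectedComponent fun v w h ↦ (hside v w).mpr h
      _ ≤ (range σ).ncard + 1 := hT.connected.card_connectedComponent_deleteEdges_le _
      _ ≤ m + 1 := by
          have := Finite.card_range_le σ
          rw [Nat.card_coe_set_eq, Nat.card_fin] at this
          omega

theorem Nat.pow_two_mul_sub_two_mul_le {c x k : ℕ} (hc : c ≤ 2 * x) (hx : 1 ≤ x) :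
    c ^ (2 * k - 2) * (2 * k - 2 + 1) ^ (2 * k - 2 + 1) ≤ (4 * k * x) ^ (2 * k) := by
  rcases k with _ | k
  · simp
  calc c ^ (2 * (k + 1) - 2) * (2 * (k + 1) - 2 + 1) ^ (2 * (k + 1) - 2 + 1)
      = c ^ (2 * k) * (2 * k + 1) ^ (2 * k + 1) := by rw [show 2 * (k + 1) - 2 = 2 * k by omega]
    _ ≤ (2 * x) ^ (2 * k + 2) * (2 * k + 2) ^ (2 * k + 2) := Nat.mul_le_mul
      ((Nat.pow_le_pow_left hc _).trans (Nat.pow_le_pow_right (by omega) (by omega)))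
      ((Nat.pow_le_pow_left (by omega) _).trans (Nat.pow_le_pow_right (by omega) (by omega)))
    _ = (4 * (k + 1) * x) ^ (2 * (k + 1)) := by rw [← mul_pow]; ring_nf

theorem stmt_7_general {V : Type} [Fintype V] (T : SimpleGraph V) (hT : T.IsTree)
    (X : Set V) (hX : X.Nonempty) (k : ℕ) :
    ({Q : Setoid ↥X | ∃ R : Setoid V, (crossingEdges T R).ncard ≤ 2 * k - 2 ∧
        ∀ x y : ↥X, (Q.r x y ↔ R.r (x : V) (y : V))}).ncard
      ≤ (4 * k * X.ncard) ^ (2 * k) := by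
  obtain ⟨r, hr⟩ := hX
  refine (Setoid.ncard_le_of_forall_exists_ker_le
    (fun (F : Fin (2 * k - 2) → T.cutTraces X r) (x : X) i ↦ (x : V) ∈ (F i : Set V))
    (2 * k - 2 + 1) ?_).trans ?_
  · rintro Q ⟨R, hR, hQR⟩
    obtain ⟨F, hle, hcard⟩ := hT.exists_ker_le_of_ncard_crossingEdges_le X r hR
    exact ⟨F, fun x y hxy ↦ (hQR x y).mpr (hle hxy), hcard⟩
  · rw [Nat.card_fun, Nat.card_fin, Nat.card_coe_set_eq]
    exact Nat.pow_two_mul_sub_two_mul_le (hT.connected.ncard_cutTraces_lt hr).le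
      ((ncard_pos).mpr ⟨r, hr⟩)

/-- Let `T` be a finite tree, `X` a nonempty set of its vertices and `k ≥ 1`.  The number of
partitions of `X` (encoded as setoids on `X`) arising as projections onto `X` of partitions
of the vertices of `T` crossed by at most `2k - 2` edges of `T` is at most `(4k|X|)^(2k)`. -/
theorem stmt_7 {V : Type} [Fintype V] (T : SimpleGraph V) (hT : T.IsTree)
    (X : Set V) (hX : X.Nonempty) (k : ℕ) (hk : 1 ≤ k) :
    ({Q : Setoid ↥X | ∃ R : Setoid V, (crossingEdges T R).ncard ≤ 2 * k - 2 ∧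
        ∀ x y : ↥X, (Q.r x y ↔ R.r (x : V) (y : V))}).ncard
      ≤ (4 * k * X.ncard) ^ (2 * k) :=
  stmt_7_general T hT X hX k
end

section
/- Let (τ,χ) be a tree decomposition of a graph G, let t ∈ V(τ), and let (X_1,X_2) be a separation of G with X = X_1 ∩ X_2. Construct for i = 1,2 the pair (τ^i, χ^i) where τ^i is a copy of τ and χ^i(t') = χ(t') ∩ X_i, augmented by inserting each x ∈ X \ χ(t) into all bags on the path from t (inclusive) to the bag nearest to t containing x (exclusive). Then joining τ^1 and τ^2 by an edge between the two copies of t, with the union of the bag functions, yields a tree decomposition of G, provided X ⊆ χ^i(t^i) for both i. -/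
/-!
The joined tree is `(τ ⊕g τ) ⊔ edge (inl t₀) (inr t₀)`: two trees joined by an edge between
different components, hence a tree. Every edge of `G` lies inside `X₁` or inside `X₂`, so a bag of
the corresponding copy covers it. For `v ∈ X_i`, the nodes of the `i`-th copy whose bag contains
`v` are the nodes of `τ` whose bag contains `v`, together with, when `v ∈ X \ χ t₀`, the path from
`t₀` to `tx v`; this path meets the old (connected) set at `tx v`. If `v` lies in both `X_i`, both
sets contain `t₀`, and the new edge joins the two copies.
-/

/-- `(τ, χ)` is a tree decomposition of the graph `G`. -/
def IsTreeDecomp {V ι : Type} (G : SimpleGraph V) (τ : SimpleGraph ι) (χ : ι → Set V) : Prop :=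
  τ.IsTree ∧
  (∀ v : V, ∃ t, v ∈ χ t) ∧
  (∀ u v : V, G.Adj u v → ∃ t, u ∈ χ t ∧ v ∈ χ t) ∧
  (∀ v : V, (τ.induce {t | v ∈ χ t}).Connected)

/-- `u` lies on the (unique) path between `a` and `b` in `τ`:
every walk from `a` to `b` passes through `u`. -/
def Between {ι : Type} (τ : SimpleGraph ι) (a b u : ι) : Prop :=
  ∀ w : τ.Walk a b, u ∈ w.support

namespace SimpleGraph

variable {U V W : Type*} {F : SimpleGraph U} {G : SimpleGraph V} {H : SimpleGraph W}

lemma IsAcyclic.not_isCycle_of_support_subset_range (hF : F.IsAcyclic) (f : F ↪g G) {x : V}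
    {c : G.Walk x x} (hc : c.IsCycle) (hs : ∀ y ∈ c.support, y ∈ Set.range f) : False := by
  have hrange : (G.induce (Set.range f)).IsAcyclic := f.isoInduceRange.isAcyclic_iff.mp hF
  refine hrange (c.induce _ hs) ?_
  rwa [← Walk.isCycle_map_iff_of_injective (f := (Embedding.induce (Set.range f)).toHom)
    Subtype.val_injective, Walk.map_induce]

lemma IsAcyclic.sum (hG : G.IsAcyclic) (hH : H.IsAcyclic) : (G ⊕g H).IsAcyclic := by
  classical
  have reachable {x y} (c : (G ⊕g H).Walk x x) (hy : y ∈ c.support) : (G ⊕g H).Reachable x y :=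
    ⟨c.takeUntil y hy⟩
  rintro (v | w) c hc
  · refine hG.not_isCycle_of_support_subset_range Embedding.sumInl hc fun y hy => ?_
    rcases y with v' | w'
    · exact ⟨v', rfl⟩
    · exact absurd (reachable c hy) (not_reachable_sum_inl_inr _ _)
  · refine hH.not_isCycle_of_support_subset_range Embedding.sumInr hc fun y hy => ?_
    rcases y with v' | w'
    · exact absurd (reachable c hy).symm (not_reachable_sum_inl_inr _ _)
    · exact ⟨w', rfl⟩

lemma IsTree.sum_sup_edge (hG : G.IsTree) (hH : H.IsTree) (v : V) (w : W) :
    ((G ⊕g H) ⊔ edge (Sum.inl v) (Sum.inr w)).IsTree :=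
  ⟨hG.connected.sum_sup_edge hH.connected,
    (hG.isAcyclic.sum hH.isAcyclic).sup_edge_of_not_reachable (not_reachable_sum_inl_inr v w)⟩

lemma Connected.induce_image {G' : SimpleGraph W} (f : G →g G') {s : Set V}
    (hs : (G.induce s).Connected) : (G'.induce (f '' s)).Connected :=
  hs.map (induceHom f (Set.mapsTo_image f s)) <| by
    rintro ⟨_, x, hx, rfl⟩
    exact ⟨⟨x, hx⟩, rfl⟩

lemma fromRel_eq_sum_sup_edge (v : V) (w : W) :
    fromRel (fun a b =>
      (∃ u u', a = Sum.inl u ∧ b = Sum.inl u' ∧ G.Adj u u') ∨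
      (∃ u u', a = Sum.inr u ∧ b = Sum.inr u' ∧ H.Adj u u') ∨
      (a = Sum.inl v ∧ b = Sum.inr w)) = (G ⊕g H) ⊔ edge (Sum.inl v) (Sum.inr w) := by
  ext (a | a) (b | b) <;> simp [edge_adj, adj_comm, and_comm] <;> exact fun h => h.ne

lemma connected_induce_sum_sup_edge {v : V} {w : W} {S : Set (V ⊕ W)} {L : Set V} {R : Set W}
    {P Q : Prop} (hL : (G.induce L).Connected) (hR : (H.induce R).Connected)
    (hl : ∀ a, Sum.inl a ∈ S ↔ P ∧ a ∈ L) (hr : ∀ b, Sum.inr b ∈ S ↔ Q ∧ b ∈ R)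
    (hPQ : P ∨ Q) (hlink : P → Q → v ∈ L ∧ w ∈ R) :
    (((G ⊕g H) ⊔ edge (Sum.inl v) (Sum.inr w)).induce S).Connected := by
  set K := (G ⊕g H) ⊔ edge (Sum.inl v) (Sum.inr w)
  have hL' : (K.induce (Sum.inl '' L)).Connected :=
    hL.induce_image ((Hom.ofLE le_sup_left).comp Embedding.sumInl.toHom)
  have hR' : (K.induce (Sum.inr '' R)).Connected :=
    hR.induce_image ((Hom.ofLE le_sup_left).comp Embedding.sumInr.toHom)
  by_cases hP : P <;> by_cases hQ : Q
  · obtain ⟨hv, hw⟩ := hlink hP hQ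
    obtain rfl : S = Sum.inl '' L ∪ Sum.inr '' R := by ext (a | b) <;> simp [hl, hr, hP, hQ]
    exact connected_induce_union hL'.preconnected hR'.preconnected (Set.mem_image_of_mem _ hv)
      (Set.mem_image_of_mem _ hw) (by simp [K, edge_adj])
  · obtain rfl : S = Sum.inl '' L := by ext (a | b) <;> simp [hl, hr, hP, hQ]
    exact hL'
  · obtain rfl : S = Sum.inr '' R := by ext (a | b) <;> simp [hl, hr, hP, hQ]
    exact hR'
  · exact (hPQ.elim hP hQ).elim

lemma IsAcyclic.between_iff_mem_support {ι : Type} {τ : SimpleGraph ι}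
    (hτ : τ.IsAcyclic) {a b u : ι} {p : τ.Walk a b} (hp : p.IsPath) :
    Between τ a b u ↔ u ∈ p.support := by
  classical
  refine ⟨fun h => h p, fun hu w => ?_⟩
  have hpw : p = w.bypass :=
    congrArg Subtype.val ((hτ.subsingleton_path a b).elim ⟨p, hp⟩ ⟨w.bypass, w.bypass_isPath⟩)
  exact w.support_bypass_subset_support (hpw ▸ hu)

end SimpleGraph

open SimpleGraph

lemma mem_and_mem_or_mem_and_mem_of_adj {V : Type} {G : SimpleGraph V} {X₁ X₂ : Set V}
    (hcover : X₁ ∪ X₂ = Set.univ) (hsep : ∀ a b : V, G.Adj a b → a ∈ X₁ \ X₂ → b ∉ X₂ \ X₁)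
    {a b : V} (hab : G.Adj a b) : (a ∈ X₁ ∧ b ∈ X₁) ∨ (a ∈ X₂ ∧ b ∈ X₂) := by
  have ha : a ∈ X₁ ∪ X₂ := hcover ▸ Set.mem_univ a
  have hb : b ∈ X₁ ∪ X₂ := hcover ▸ Set.mem_univ b
  have hab' := hsep a b hab
  have hba' := hsep b a hab.symm
  simp only [Set.mem_union, Set.mem_sdiff] at ha hb hab' hba'
  tauto

section Augmentation

variable {V ι : Type} (τ : SimpleGraph ι) (χ : ι → Set V) (t₀ : ι) (X : Set V) (tx : V → ι)

/-- For `v ∈ X_i`, the nodes of the `i`-th copy whose bag `χ^i` contains `v`. -/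
def augmentedNodes (v : V) : Set ι :=
  {u | v ∈ χ u} ∪ {u | v ∈ X \ χ t₀ ∧ Between τ t₀ (tx v) u ∧ u ≠ tx v}

variable {τ χ t₀ X tx}

lemma mem_inter_union_iff_mem_augmentedNodes {Y : Set V} (hXY : X ⊆ Y) {u : ι} {v : V} :
    v ∈ (χ u ∩ Y) ∪ {x | x ∈ X \ χ t₀ ∧ Between τ t₀ (tx x) u ∧ u ≠ tx x} ↔
      v ∈ Y ∧ u ∈ augmentedNodes τ χ t₀ X tx v := by
  have hY := @hXY v
  simp only [augmentedNodes, Set.mem_union, Set.mem_inter_iff, Set.mem_sdiff, Set.mem_ofPred_eq]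
  tauto

lemma connected_induce_augmentedNodes {v : V} (hτ : τ.IsTree)
    (hA : (τ.induce {u | v ∈ χ u}).Connected) (htx : v ∈ X \ χ t₀ → v ∈ χ (tx v)) :
    (τ.induce (augmentedNodes τ χ t₀ X tx v)).Connected := by
  by_cases hv : v ∈ X \ χ t₀
  · obtain ⟨p, hp⟩ := hτ.connected.preconnected.exists_isPath t₀ (tx v)
    have hpath : augmentedNodes τ χ t₀ X tx v = {u | v ∈ χ u} ∪ {u | u ∈ p.support} := by
      ext u
      simp only [augmentedNodes, Set.mem_union, Set.mem_ofPred_eq,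
        ← hτ.isAcyclic.between_iff_mem_support hp]
      by_cases hu : u = tx v
      · subst hu
        simp [htx hv]
      · simp [hv, hu]
    rw [hpath]
    exact induce_union_connected hA.preconnected p.connected_induce_support.preconnected
      ⟨tx v, htx hv, p.end_mem_support⟩
  · have hbags : augmentedNodes τ χ t₀ X tx v = {u | v ∈ χ u} := by
      simp only [augmentedNodes, hv, false_and, Set.ofPred_false, Set.union_empty]
    rwa [hbags]

lemma start_mem_augmentedNodes {v : V} (hv : v ∈ X) (htx : v ∈ X \ χ t₀ → v ∈ χ (tx v)) :
    t₀ ∈ augmentedNodes τ χ t₀ X tx v := by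
  by_cases hv₀ : v ∈ χ t₀
  · exact Or.inl hv₀
  · have hne : t₀ ≠ tx v := fun h => hv₀ (h ▸ htx ⟨hv, hv₀⟩)
    exact Or.inr ⟨⟨hv, hv₀⟩, fun w => w.start_mem_support, hne⟩

end Augmentation

theorem stmt_15_general {V ι : Type} (G : SimpleGraph V) (τ : SimpleGraph ι) (χ : ι → Set V)
    (h : IsTreeDecomp G τ χ) (t₀ : ι) (X₁ X₂ : Set V)
    (hcover : X₁ ∪ X₂ = Set.univ)
    (hsep : ∀ a b : V, G.Adj a b → a ∈ X₁ \ X₂ → b ∉ X₂ \ X₁)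
    (tx : V → ι)
    (htx : ∀ x ∈ (X₁ ∩ X₂) \ χ t₀,
      x ∈ χ (tx x) ∧ ∀ t' : ι, x ∈ χ t' → Between τ t₀ t' (tx x))
    (χ' : (ι ⊕ ι) → Set V)
    (hχ'1 : ∀ u : ι, χ' (Sum.inl u) =
      (χ u ∩ X₁) ∪ {x | x ∈ (X₁ ∩ X₂) \ χ t₀ ∧ Between τ t₀ (tx x) u ∧ u ≠ tx x})
    (hχ'2 : ∀ u : ι, χ' (Sum.inr u) =
      (χ u ∩ X₂) ∪ {x | x ∈ (X₁ ∩ X₂) \ χ t₀ ∧ Between τ t₀ (tx x) u ∧ u ≠ tx x}) :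
    IsTreeDecomp G
      (SimpleGraph.fromRel (fun a b =>
        (∃ u v : ι, a = Sum.inl u ∧ b = Sum.inl v ∧ τ.Adj u v) ∨
        (∃ u v : ι, a = Sum.inr u ∧ b = Sum.inr v ∧ τ.Adj u v) ∨
        (a = Sum.inl t₀ ∧ b = Sum.inr t₀)))
      χ' := by
  obtain ⟨hτ, hcov, hedge, hconn⟩ := h
  set C := augmentedNodes τ χ t₀ (X₁ ∩ X₂) tx
  have htx' (v : V) (hv : v ∈ (X₁ ∩ X₂) \ χ t₀) : v ∈ χ (tx v) := (htx v hv).1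
  have hmem₁ (v : V) (u : ι) : v ∈ χ' (Sum.inl u) ↔ v ∈ X₁ ∧ u ∈ C v := by
    rw [hχ'1]
    exact mem_inter_union_iff_mem_augmentedNodes Set.inter_subset_left
  have hmem₂ (v : V) (u : ι) : v ∈ χ' (Sum.inr u) ↔ v ∈ X₂ ∧ u ∈ C v := by
    rw [hχ'2]
    exact mem_inter_union_iff_mem_augmentedNodes Set.inter_subset_right
  have hX (v : V) : v ∈ X₁ ∨ v ∈ X₂ := Set.eq_univ_iff_forall.mp hcover v
  rw [fromRel_eq_sum_sup_edge]
  refine ⟨hτ.sum_sup_edge hτ t₀ t₀, fun v => ?_, fun a b hab => ?_, fun v => ?_⟩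
  · obtain ⟨t, ht⟩ := hcov v
    rcases hX v with hv | hv
    exacts [⟨Sum.inl t, (hmem₁ v t).2 ⟨hv, Or.inl ht⟩⟩, ⟨Sum.inr t, (hmem₂ v t).2 ⟨hv, Or.inl ht⟩⟩]
  · obtain ⟨t, ha, hb⟩ := hedge a b hab
    rcases mem_and_mem_or_mem_and_mem_of_adj hcover hsep hab with ⟨ha₁, hb₁⟩ | ⟨ha₂, hb₂⟩
    · exact ⟨Sum.inl t, (hmem₁ a t).2 ⟨ha₁, Or.inl ha⟩, (hmem₁ b t).2 ⟨hb₁, Or.inl hb⟩⟩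
    · exact ⟨Sum.inr t, (hmem₂ a t).2 ⟨ha₂, Or.inl ha⟩, (hmem₂ b t).2 ⟨hb₂, Or.inl hb⟩⟩
  · have hCv := connected_induce_augmentedNodes hτ (hconn v) (htx' v)
    exact connected_induce_sum_sup_edge hCv hCv (hmem₁ v) (hmem₂ v) (hX v) fun h₁ h₂ =>
      ⟨start_mem_augmentedNodes ⟨h₁, h₂⟩ (htx' v), start_mem_augmentedNodes ⟨h₁, h₂⟩ (htx' v)⟩

/-- Splitting a tree decomposition `(τ, χ)` of `G` along a separation `(X₁, X₂)` at a node
`t₀`.  For `i = 1, 2` one takes a copy of `τ` with bags `χ(t') ∩ X_i`, augmented by inserting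
each `x ∈ (X₁ ∩ X₂) \ χ(t₀)` into all bags on the path from `t₀` (inclusive) to the node
`tx x` nearest to `t₀` whose bag contains `x` (exclusive).  Joining the two copies by an edge
between the copies of `t₀` yields a tree decomposition of `G`, provided
`X₁ ∩ X₂` is contained in both copies of the bag of `t₀`. -/
theorem stmt_15 {V ι : Type} (G : SimpleGraph V) (τ : SimpleGraph ι) (χ : ι → Set V)
    (h : IsTreeDecomp G τ χ) (t₀ : ι) (X₁ X₂ : Set V)
    (hcover : X₁ ∪ X₂ = Set.univ)
    (hsep : ∀ a b : V, G.Adj a b → a ∈ X₁ \ X₂ → b ∉ X₂ \ X₁)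
    (tx : V → ι)
    (htx : ∀ x ∈ (X₁ ∩ X₂) \ χ t₀,
      x ∈ χ (tx x) ∧ ∀ t' : ι, x ∈ χ t' → Between τ t₀ t' (tx x))
    (χ' : (ι ⊕ ι) → Set V)
    (hχ'1 : ∀ u : ι, χ' (Sum.inl u) =
      (χ u ∩ X₁) ∪ {x | x ∈ (X₁ ∩ X₂) \ χ t₀ ∧ Between τ t₀ (tx x) u ∧ u ≠ tx x})
    (hχ'2 : ∀ u : ι, χ' (Sum.inr u) =
      (χ u ∩ X₂) ∪ {x | x ∈ (X₁ ∩ X₂) \ χ t₀ ∧ Between τ t₀ (tx x) u ∧ u ≠ tx x})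
    (hX1 : X₁ ∩ X₂ ⊆ χ' (Sum.inl t₀)) (hX2 : X₁ ∩ X₂ ⊆ χ' (Sum.inr t₀)) :
    IsTreeDecomp G
      (SimpleGraph.fromRel (fun a b =>
        (∃ u v : ι, a = Sum.inl u ∧ b = Sum.inl v ∧ τ.Adj u v) ∨
        (∃ u v : ι, a = Sum.inr u ∧ b = Sum.inr v ∧ τ.Adj u v) ∨
        (a = Sum.inl t₀ ∧ b = Sum.inr t₀)))
      χ' :=
  stmt_15_general G τ χ h t₀ X₁ X₂ hcover hsep tx htx χ' hχ'1 hχ'2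
end

section
/- For all integers n, k ≥ 1 there exists a family F of functions from {1,...,n} to {1,...,k²} of size k^{O(1)}·log n such that for every subset S ⊆ {1,...,n} with |S| = k there is a function f ∈ F injective on S. -/
open Finset

/-- Counting functions with a fixed collision. -/
lemma fix_card {n m : ℕ} (i j : Fin n) (hij : i ≠ j) :
    (Finset.univ.filter fun g : Fin n → Fin m => g i = g j).card ≤ m ^ (n - 1) := by
  classical
  have : (Finset.univ.filter fun g : Fin n → Fin m => g i = g j).card ≤
      (Finset.univ : Finset ({x : Fin n // x ≠ j} → Fin m)).card := by
    apply Finset.card_le_card_of_injOn (fun g => fun x : {x : Fin n // x ≠ j} => g x)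
      (fun _ _ => Finset.mem_univ _)
    intro g₁ h₁ g₂ h₂ h
    simp only [Finset.coe_filter, Set.mem_setOf_eq, Finset.mem_univ, true_and] at h₁ h₂
    funext x
    by_cases hx : x = j
    · subst hx
      have hi : g₁ i = g₂ i := congrFun h ⟨i, hij⟩
      rw [← h₁, ← h₂]; exact hi
    · exact congrFun h ⟨x, hx⟩
  simpa [Fintype.card_subtype_compl] using this

/-- At least half of all functions to `Fin (k^2)` are injective on a fixed `k`-set. -/
lemma bad_card {n k : ℕ} (hn : 1 ≤ n) (S : Finset (Fin n)) (hS : S.card = k) :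
    2 * (Finset.univ.filter fun g : Fin n → Fin (k ^ 2) => ¬ Set.InjOn g ↑S).card
      ≤ (k ^ 2) ^ n := by
  classical
  set m := k ^ 2 with hm
  have hsub : (Finset.univ.filter fun g : Fin n → Fin m => ¬ Set.InjOn g ↑S) ⊆
      (S.powersetCard 2).biUnion
        (fun T => Finset.univ.filter fun g : Fin n → Fin m => ¬ Set.InjOn g ↑T) := by
    intro g hg
    simp only [Finset.mem_filter, Finset.mem_univ, true_and] at hg
    rw [Set.InjOn] at hg
    push_neg at hg
    obtain ⟨x, hx, y, hy, hgxy, hxy⟩ := hg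
    refine Finset.mem_biUnion.2 ⟨{x, y}, ?_, ?_⟩
    · rw [Finset.mem_powersetCard]
      exact ⟨by intro z hz; simp at hz; rcases hz with h | h <;> subst h <;> assumption,
        Finset.card_pair hxy⟩
    · simp only [Finset.mem_filter, Finset.mem_univ, true_and]
      intro hinj
      exact hxy (hinj (by simp) (by simp) hgxy)
  have hbound : ∀ T ∈ S.powersetCard 2,
      (Finset.univ.filter fun g : Fin n → Fin m => ¬ Set.InjOn g ↑T).card ≤ m ^ (n - 1) := by
    intro T hT
    rw [Finset.mem_powersetCard] at hT
    obtain ⟨a, b, hab, rfl⟩ := Finset.card_eq_two.1 hT.2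
    refine le_trans (Finset.card_le_card ?_) (fix_card a b hab)
    intro g hg
    simp only [Finset.mem_filter, Finset.mem_univ, true_and] at hg ⊢
    by_contra hne
    apply hg
    intro x hx y hy hxy
    simp only [Finset.coe_insert, Finset.coe_singleton, Set.mem_insert_iff,
      Set.mem_singleton_iff] at hx hy
    rcases hx with rfl | rfl <;> rcases hy with rfl | rfl
    · rfl
    · exact absurd hxy hne
    · exact absurd hxy.symm hne
    · rfl
  calc 2 * (Finset.univ.filter fun g : Fin n → Fin m => ¬ Set.InjOn g ↑S).card
      ≤ 2 * ((S.powersetCard 2).card * m ^ (n - 1)) := by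
        refine Nat.mul_le_mul_left _ ?_
        refine le_trans (Finset.card_le_card hsub) ?_
        refine le_trans (Finset.card_biUnion_le) ?_
        calc ∑ T ∈ S.powersetCard 2,
            (Finset.univ.filter fun g : Fin n → Fin m => ¬ Set.InjOn g ↑T).card
            ≤ ∑ _T ∈ S.powersetCard 2, m ^ (n - 1) := Finset.sum_le_sum hbound
          _ = (S.powersetCard 2).card * m ^ (n - 1) := by rw [Finset.sum_const, smul_eq_mul]
    _ ≤ m ^ n := by
        rw [Finset.card_powersetCard, hS, Nat.choose_two_right]
        have h0 : 2 * (k * (k - 1) / 2) ≤ k * (k - 1) := by omega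
        have h1 : 2 * (k * (k - 1) / 2 * m ^ (n - 1)) ≤ k * (k - 1) * m ^ (n - 1) := by
          rw [← Nat.mul_assoc]
          exact Nat.mul_le_mul_right _ h0
        have h2 : k * (k - 1) ≤ m := by
          rw [hm, sq]; exact Nat.mul_le_mul_left k (Nat.sub_le _ _)
        calc 2 * (k * (k - 1) / 2 * m ^ (n - 1)) ≤ k * (k - 1) * m ^ (n - 1) := h1
          _ ≤ m * m ^ (n - 1) := Nat.mul_le_mul_right _ h2
          _ = m ^ n := by rw [← pow_succ']; congr 1; omega

/-- Averaging: some function is injective on at least half the sets in the family. -/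
lemma exists_good {n k : ℕ} (hn : 1 ≤ n) (hk : 1 ≤ k) (𝒮 : Finset (Finset (Fin n)))
    (h𝒮 : ∀ S ∈ 𝒮, S.card = k) :
    ∃ g : Fin n → Fin (k ^ 2),
      2 * (𝒮.filter fun S : Finset (Fin n) =>
        ¬ Set.InjOn g (S : Set (Fin n))).card ≤ 𝒮.card := by
  classical
  have hne : (Finset.univ : Finset (Fin n → Fin (k ^ 2))).Nonempty := by
    have : NeZero (k ^ 2) := ⟨by positivity⟩
    exact Finset.univ_nonempty
  have hcard : (Finset.univ : Finset (Fin n → Fin (k ^ 2))).card = (k ^ 2) ^ n := by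
    simp [Fintype.card_fun]
  have key : ∑ g : Fin n → Fin (k ^ 2),
      (𝒮.filter fun S : Finset (Fin n) => ¬ Set.InjOn g (S : Set (Fin n))).card
      = ∑ S ∈ 𝒮, (Finset.univ.filter fun g : Fin n → Fin (k ^ 2) =>
          ¬ Set.InjOn g (S : Set (Fin n))).card := by
    simp only [Finset.card_filter]
    rw [Finset.sum_comm]
  have hsum : ∑ g : Fin n → Fin (k ^ 2),
      2 * (𝒮.filter fun S : Finset (Fin n) =>
        ¬ Set.InjOn g (S : Set (Fin n))).card ≤
      ∑ _g : Fin n → Fin (k ^ 2), 𝒮.card := by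
    rw [← Finset.mul_sum, key, Finset.mul_sum, Finset.sum_const, hcard, smul_eq_mul, mul_comm]
    calc ∑ S ∈ 𝒮, 2 * (Finset.univ.filter fun g : Fin n → Fin (k ^ 2) =>
            ¬ Set.InjOn g (S : Set (Fin n))).card
        ≤ ∑ S ∈ 𝒮, (k ^ 2) ^ n := Finset.sum_le_sum fun S hS => bad_card hn S (h𝒮 S hS)
      _ = 𝒮.card * (k ^ 2) ^ n := by rw [Finset.sum_const, smul_eq_mul]
  obtain ⟨g, _, hg⟩ := Finset.exists_le_of_sum_le hne hsum
  exact ⟨g, hg⟩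

/-- Greedy halving: a covering family of logarithmic size exists. -/
lemma greedy {n k : ℕ} (hn : 1 ≤ n) (hk : 1 ≤ k) :
    ∀ N : ℕ, ∀ 𝒮 : Finset (Finset (Fin n)), 𝒮.card ≤ N → (∀ S ∈ 𝒮, S.card = k) →
    ∃ F : Finset (Fin n → Fin (k ^ 2)),
      F.card ≤ Nat.log 2 𝒮.card + 1 ∧
      ∀ S ∈ 𝒮, ∃ f ∈ F, Set.InjOn f (S : Set (Fin n)) := by
  classical
  intro N
  induction N with
  | zero =>
    intro 𝒮 hcard _
    refine ⟨∅, by simp, fun S hS => ?_⟩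
    rw [Nat.le_zero, Finset.card_eq_zero] at hcard
    subst hcard; exact absurd hS (Finset.notMem_empty S)
  | succ N ih =>
    intro 𝒮 hcard h𝒮
    rcases Finset.eq_empty_or_nonempty 𝒮 with rfl | hne
    · exact ⟨∅, by simp, fun S hS => absurd hS (Finset.notMem_empty S)⟩
    obtain ⟨g, hg⟩ := exists_good hn hk 𝒮 h𝒮
    set 𝒮' := 𝒮.filter fun S : Finset (Fin n) => ¬ Set.InjOn g (S : Set (Fin n)) with h𝒮'
    have h𝒮'le : 𝒮'.card ≤ 𝒮.card / 2 := Nat.le_div_iff_mul_le (by norm_num) |>.2 (by omega)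
    have h1 : 1 ≤ 𝒮.card := Finset.card_pos.2 hne
    have h𝒮'N : 𝒮'.card ≤ N := by
      have := Nat.div_lt_self (Nat.lt_of_lt_of_le Nat.zero_lt_one h1) (by norm_num : 1 < 2)
      omega
    rcases Finset.eq_empty_or_nonempty 𝒮' with he | hne'
    · refine ⟨{g}, by simp, fun S hS => ⟨g, Finset.mem_singleton_self g, ?_⟩⟩
      by_contra hinj
      have hmem : S ∈ 𝒮' := Finset.mem_filter.2 ⟨hS, hinj⟩
      rw [he] at hmem; exact absurd hmem (Finset.notMem_empty S)
    obtain ⟨F', hF'card, hF'cov⟩ := ih 𝒮' h𝒮'N (fun S hS => h𝒮 S (Finset.mem_of_mem_filter S hS))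
    refine ⟨insert g F', ?_, ?_⟩
    · have h2 : 2 ≤ 𝒮.card := by
          have : 1 ≤ 𝒮'.card := Finset.card_pos.2 hne'
          omega
      have hlog1 : 0 < Nat.log 2 𝒮.card := Nat.log_pos (by norm_num) h2
      have hlog : Nat.log 2 𝒮'.card ≤ Nat.log 2 𝒮.card - 1 := by
        calc Nat.log 2 𝒮'.card ≤ Nat.log 2 (𝒮.card / 2) := Nat.log_mono_right h𝒮'le
          _ = Nat.log 2 𝒮.card - 1 := Nat.log_div_base 2 𝒮.card
      have := Finset.card_insert_le g F'
      omega
    · intro S hS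
      by_cases hinj : Set.InjOn g (S : Set (Fin n))
      · exact ⟨g, Finset.mem_insert_self g F', hinj⟩
      · obtain ⟨f, hf, hfinj⟩ := hF'cov S (Finset.mem_filter.2 ⟨hS, hinj⟩)
        exact ⟨f, Finset.mem_insert_of_mem hf, hfinj⟩

/-- The `(n, k, k²)`-splitter theorem of Naor, Schulman and Srinivasan: for all `n, k ≥ 1`
there is a family `F` of functions from `{1, …, n}` to `{1, …, k²}` of size
`k^{O(1)} · log n` such that every `k`-element subset `S` of `{1, …, n}` is split evenly
(i.e. injectively, since the range has `k²` elements) by some member of `F`. -/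
theorem stmt_19 : ∃ C : ℕ, ∀ n k : ℕ, 1 ≤ n → 1 ≤ k →
    ∃ F : Finset (Fin n → Fin (k ^ 2)),
      F.card ≤ k ^ C * (Nat.log 2 n + 1) ∧
      ∀ S : Finset (Fin n), S.card = k → ∃ f ∈ F, Set.InjOn f ↑S := by
  classical
  refine ⟨2, fun n k hn hk => ?_⟩
  set 𝒮 : Finset (Finset (Fin n)) := Finset.powersetCard k Finset.univ with h𝒮
  obtain ⟨F, hFcard, hFcov⟩ := greedy hn hk 𝒮.card 𝒮 le_rfl
    (fun S hS => (Finset.mem_powersetCard.1 hS).2)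
  refine ⟨F, ?_, fun S hScard => hFcov S
    (Finset.mem_powersetCard.2 ⟨Finset.subset_univ S, hScard⟩)⟩
  have hcard𝒮 : 𝒮.card = n.choose k := by
    rw [h𝒮, Finset.card_powersetCard, Finset.card_univ, Fintype.card_fin]
  set L := Nat.log 2 n with hL
  have hkk : k ≤ k ^ 2 := by nlinarith
  have hmain : Nat.log 2 (n.choose k) + 1 ≤ k ^ 2 * (L + 1) := by
    rcases Nat.eq_zero_or_pos (n.choose k) with h0 | hpos
    · rw [h0]
      simp only [Nat.log_zero_right]
      calc 0 + 1 = 1 * 1 := by norm_num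
        _ ≤ k ^ 2 * (L + 1) := Nat.mul_le_mul (by nlinarith) (by omega)
    · have h2 : n < 2 ^ (L + 1) := Nat.lt_pow_succ_log_self (by norm_num) n
      have h3 : n.choose k < 2 ^ ((L + 1) * k) := by
        calc n.choose k ≤ n ^ k := Nat.choose_le_pow n k
          _ < (2 ^ (L + 1)) ^ k := Nat.pow_lt_pow_left h2 (by omega)
          _ = 2 ^ ((L + 1) * k) := by rw [← pow_mul]
      have h4 : Nat.log 2 (n.choose k) < (L + 1) * k :=
        Nat.log_lt_of_lt_pow (Nat.pos_iff_ne_zero.1 hpos) h3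
      calc Nat.log 2 (n.choose k) + 1 ≤ (L + 1) * k := h4
        _ = k * (L + 1) := mul_comm _ _
        _ ≤ k ^ 2 * (L + 1) := Nat.mul_le_mul_right _ hkk
  calc F.card ≤ Nat.log 2 𝒮.card + 1 := hFcard
    _ = Nat.log 2 (n.choose k) + 1 := by rw [hcard𝒮]
    _ ≤ k ^ 2 * (L + 1) := hmain
end
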